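/- Solution of the intersection equation for a point source: let z₀ ∈ ℂ with z₀ ≠ 0 and v ∈ ℝ. Set R = √(v² + z₀·conj(z₀)) and ξ₁ = (R − v)/conj(z₀). Then Φ(ξ₁, 0, R) = (z₀, v); that is, the oriented line from the origin with direction coordinate ξ₁ reaches the point (z₀, v) at affine parameter R, the distance from the origin to (z₀,v). -/

import Mathlib

/-!
On lines through the origin (`η = 0`) the map `Φ` is `Φ(ξ, 0, r) = r • d(ξ)`, where `d = dmap` is
inverse stereographic projection onto the unit sphere. Since `R² − v² = |z₀|²`, the coordinate
`ξ₁ = (R − v)/conj z₀` equals `z₀/(R + v)`, the stereographic coordinate of the unit vector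
`(z₀, v)/R`; hence `Φ(ξ₁, 0, R) = R • d(ξ₁) = (z₀, v)`.
-/

open Complex ComplexConjugate

/-- The map `Φ` sending an oriented line with coordinates `(ξ, η)` and affine
parameter `r` to the corresponding point of `ℝ³ ≃ ℂ × ℝ`. -/
noncomputable def Phi (ξ η : ℂ) (r : ℝ) : ℂ × ℝ :=
  ((2 * (η - conj η * ξ ^ 2) + 2 * ξ * (1 + ξ * conj ξ) * (r : ℂ)) / (1 + ξ * conj ξ) ^ 2,
   (((-2) * (η * conj ξ + conj η * ξ) + (1 - ξ ^ 2 * (conj ξ) ^ 2) * (r : ℂ)) /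
      (1 + ξ * conj ξ) ^ 2).re)

/-- The direction map: the unit vector in `ℝ³ ≃ ℂ × ℝ` with stereographic coordinate `ξ`. -/
noncomputable def dmap (ξ : ℂ) : ℂ × ℝ :=
  (2 * ξ / ((1 : ℂ) + (Complex.normSq ξ : ℂ)),
   (1 - Complex.normSq ξ) / (1 + Complex.normSq ξ))

/-- The Euclidean inner product on `ℝ³ ≃ ℂ × ℝ`. -/
noncomputable def inner3 (p q : ℂ × ℝ) : ℝ := (p.1 * conj q.1).re + p.2 * q.2

theorem Phi_zero_eq_smul_dmap (ξ : ℂ) (r : ℝ) :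
    Phi ξ 0 r = r • dmap ξ := by
  have hn : ξ * conj ξ = (normSq ξ : ℂ) := mul_conj ξ
  have hden : 1 + normSq ξ ≠ 0 := by linarith [normSq_nonneg ξ]
  have hden' : (1 + normSq ξ : ℂ) ≠ 0 := by exact_mod_cast hden
  simp only [Phi, dmap, Prod.smul_mk, real_smul, smul_eq_mul, map_zero, zero_mul, mul_zero,
    zero_add, sub_zero, Prod.mk.injEq]
  constructor
  · rw [hn]; field_simp
  · rw [← mul_pow, hn]
    norm_cast
    field_simp
    ring

section InverseStereographic

variable {z : ℂ} {v R : ℝ}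

theorem sub_mul_add_eq_normSq (hR : R ^ 2 = v ^ 2 + normSq z) : (R - v) * (R + v) = normSq z := by
  linear_combination hR

theorem add_ne_zero_of_sq_eq_add_normSq (hz : z ≠ 0) (hR : R ^ 2 = v ^ 2 + normSq z) :
    R + v ≠ 0 := by
  intro h
  have := sub_mul_add_eq_normSq hR
  rw [h, mul_zero, eq_comm, normSq_eq_zero] at this
  exact hz this

theorem ne_zero_of_sq_eq_add_normSq (hz : z ≠ 0) (hR : R ^ 2 = v ^ 2 + normSq z) : R ≠ 0 := by
  rintro rfl
  nlinarith [normSq_pos.mpr hz]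

theorem sub_div_conj_eq_div_add (hz : z ≠ 0) (hR : R ^ 2 = v ^ 2 + normSq z) :
    ((R - v : ℝ) : ℂ) / conj z = z / (R + v : ℝ) := by
  have hRv : ((R + v : ℝ) : ℂ) ≠ 0 :=
    ofReal_ne_zero.mpr (add_ne_zero_of_sq_eq_add_normSq hz hR)
  have hconj : z * conj z = ((R - v : ℝ) : ℂ) * (R + v : ℝ) := by
    rw [mul_conj, ← sub_mul_add_eq_normSq hR]; push_cast; rfl
  rw [div_eq_div_iff ((map_ne_zero _).mpr hz) hRv, hconj, mul_comm]

theorem normSq_div_add (hz : z ≠ 0) (hR : R ^ 2 = v ^ 2 + normSq z) :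
    normSq (z / (R + v : ℝ)) = (R - v) / (R + v) := by
  have hRv := add_ne_zero_of_sq_eq_add_normSq hz hR
  rw [normSq_div, normSq_ofReal, ← sub_mul_add_eq_normSq hR]
  field_simp

theorem smul_dmap_div_add (hz : z ≠ 0) (hR : R ^ 2 = v ^ 2 + normSq z) :
    R • dmap (z / (R + v : ℝ)) = (z, v) := by
  have hRv := add_ne_zero_of_sq_eq_add_normSq hz hR
  have hR0 := ne_zero_of_sq_eq_add_normSq hz hR
  have hsum : 1 + (R - v) / (R + v) = 2 * R / (R + v) := by field_simp; ring
  have hdiff : 1 - (R - v) / (R + v) = 2 * v / (R + v) := by field_simp; ring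
  simp only [dmap, Prod.smul_mk, real_smul, smul_eq_mul, normSq_div_add hz hR, hsum, hdiff,
    Prod.mk.injEq]
  constructor
  · have hRvC : (R : ℂ) + v ≠ 0 := by exact_mod_cast hRv
    have hR0C : (R : ℂ) ≠ 0 := by exact_mod_cast hR0
    rw [← ofReal_one, ← ofReal_add, hsum]
    push_cast
    field_simp
  · field_simp

end InverseStereographic

/-- Solution of the intersection equation for a point source: with
`R = √(v² + z₀·conj z₀)` and `ξ₁ = (R − v)/conj z₀`, the oriented line from the origin
with direction coordinate `ξ₁` reaches the point `(z₀, v)` at affine parameter `R`. -/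
theorem point_source_intersection (z₀ : ℂ) (hz₀ : z₀ ≠ 0) (v : ℝ)
    (R : ℝ) (hR : R = Real.sqrt (v ^ 2 + Complex.normSq z₀))
    (ξ₁ : ℂ) (hξ₁ : ξ₁ = (((R - v : ℝ) : ℂ)) / conj z₀) :
    Phi ξ₁ 0 R = (z₀, v) := by
  have hRsq : R ^ 2 = v ^ 2 + normSq z₀ := by
    rw [hR]; exact Real.sq_sqrt (add_nonneg (sq_nonneg v) (normSq_nonneg z₀))
  rw [Phi_zero_eq_smul_dmap, hξ₁, sub_div_conj_eq_div_add hz₀ hRsq, smul_dmap_div_add hz₀ hRsq]
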